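/- arXiv:1310.0992 — 5 statements merged into one kernel-verified Lean document; each statement's English description precedes it below -/
import Mathlib

section
/- Suppose (X,B) is a resolvable (v,b,r,k)-IBD with parallel classes Π_1,…,Π_r, each containing w = v/k blocks, and (Y,C) is a (w,b',r',k')-IBD on Y = {1,…,w}. For each parallel class Π_i and block C ∈ C, form the block D_{i,C} as the union of the blocks of Π_i indexed by C. Then the resulting design (X,D) is a (v, r*b', r*r', k*k')-IBD. -/
/-!
Within one parallel class every point lies in exactly one block, so the blocks of the class are
pairwise disjoint: the union of the blocks indexed by `c` has `k * |c|` points, and a point `x`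
lies in it exactly when the index of its own block belongs to `c`. Hence, class by class, the
blocks containing `x` correspond to the blocks of the indexing design containing one fixed index,
of which there are `r'`; summing over the `r` classes gives `r * r'`.
-/

open Multiset

section ExistsUniqueCover

variable {ι X : Type*} {B : ι → Finset X}

theorem pairwiseDisjoint_of_existsUnique_mem (hB : ∀ x, ∃! j, x ∈ B j) (s : Set ι) :
    s.PairwiseDisjoint B := by
  intro j₁ _ j₂ _ hne
  refine Finset.disjoint_left.2 fun x hx₁ hx₂ => hne ?_
  obtain ⟨j, -, huniq⟩ := hB x
  rw [huniq j₁ hx₁, huniq j₂ hx₂]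

theorem card_biUnion_of_existsUnique_mem [DecidableEq X] (hB : ∀ x, ∃! j, x ∈ B j) {k : ℕ}
    (hsize : ∀ j, (B j).card = k) (c : Finset ι) : (c.biUnion B).card = k * c.card := by
  rw [Finset.card_biUnion (pairwiseDisjoint_of_existsUnique_mem hB _)]
  simp [hsize, mul_comm]

theorem mem_biUnion_iff_of_existsUnique_mem [DecidableEq X] (hB : ∀ x, ∃! j, x ∈ B j)
    {x : X} {j : ι} (hx : x ∈ B j) (c : Finset ι) : x ∈ c.biUnion B ↔ j ∈ c := by
  rw [Finset.mem_biUnion]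
  constructor
  · rintro ⟨j', hj', hxj'⟩
    rwa [(hB x).unique hx hxj']
  · exact fun hj => ⟨j, hj, hx⟩

theorem card_filter_mem_map_biUnion [DecidableEq ι] [DecidableEq X] (hB : ∀ x, ∃! j, x ∈ B j)
    {x : X} {j : ι} (hx : x ∈ B j) (C : Multiset (Finset ι)) :
    card ((C.map (·.biUnion B)).filter (x ∈ ·)) = card (C.filter (j ∈ ·)) := by
  rw [filter_map, card_map]
  congr 1
  exact filter_congr fun c _ => mem_biUnion_iff_of_existsUnique_mem hB hx c

end ExistsUniqueCover

theorem Multiset.card_bind_of_card_eq {α β : Type*} {s : Multiset α} {f : α → Multiset β}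
    {n : ℕ} (hf : ∀ a ∈ s, card (f a) = n) : card (s.bind f) = card s * n := by
  rw [card_bind, map_congr (f := card ∘ f) (g := fun _ => n) rfl hf, map_const', sum_replicate,
    smul_eq_mul]

theorem stmt_3_general {X : Type*} [DecidableEq X]
    (r k w b' r' k' : ℕ)
    (B : Fin r → Fin w → Finset X)
    (hsize : ∀ i j, (B i j).card = k)
    (hpc : ∀ (i : Fin r) (x : X), ∃! j : Fin w, x ∈ B i j)
    (C : Multiset (Finset (Fin w)))
    (hCb : Multiset.card C = b')
    (hCsize : ∀ c ∈ C, c.card = k')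
    (hCrep : ∀ a : Fin w, Multiset.card (C.filter (fun c => a ∈ c)) = r') :
    ∀ D : Multiset (Finset X),
      D = (Finset.univ.val : Multiset (Fin r)).bind
            (fun i => C.map (fun c => c.biUnion (fun j => B i j))) →
      Multiset.card D = r * b' ∧
      (∀ A ∈ D, A.card = k * k') ∧
      (∀ x : X, Multiset.card (D.filter (fun A => x ∈ A)) = r * r') := by
  rintro D rfl
  refine ⟨?_, ?_, fun x => ?_⟩
  · rw [card_bind_of_card_eq fun i _ => (card_map _ _).trans hCb]
    simp
  · simp only [mem_bind, mem_map]
    rintro _ ⟨i, -, c, hc, rfl⟩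
    rw [card_biUnion_of_existsUnique_mem (hpc i) (hsize i), hCsize c hc]
  · have hclass : ∀ i : Fin r,
        card ((C.map (·.biUnion (B i))).filter (x ∈ ·)) = r' := fun i => by
      obtain ⟨j, hj, -⟩ := hpc i x
      rw [card_filter_mem_map_biUnion (hpc i) hj, hCrep j]
    rw [filter_bind, card_bind_of_card_eq fun i _ => hclass i]
    simp

/-- Shrikhande–Raghavarao construction: a resolvable (v,b,r,k)-IBD master design
and a (w,b',r',k')-IBD indexing design (w = v/k) yield a (v, r*b', r*r', k*k')-IBD. -/
theorem stmt_3 {X : Type*} [Fintype X] [DecidableEq X]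
    (v b r k w b' r' k' : ℕ)
    (hk : 2 ≤ k) (hkv : k < v) (hX : Fintype.card X = v)
    (hvw : v = k * w) (hb : b = r * w)
    (B : Fin r → Fin w → Finset X)
    (hsize : ∀ i j, (B i j).card = k)
    (hpc : ∀ (i : Fin r) (x : X), ∃! j : Fin w, x ∈ B i j)
    (C : Multiset (Finset (Fin w)))
    (hk' : 2 ≤ k') (hk'w : k' < w)
    (hCb : Multiset.card C = b')
    (hCsize : ∀ c ∈ C, c.card = k')
    (hCrep : ∀ a : Fin w, Multiset.card (C.filter (fun c => a ∈ c)) = r') :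
    ∀ D : Multiset (Finset X),
      D = (Finset.univ.val : Multiset (Fin r)).bind
            (fun i => C.map (fun c => c.biUnion (fun j => B i j))) →
      Multiset.card D = r * b' ∧
      (∀ A ∈ D, A.card = k * k') ∧
      (∀ x : X, Multiset.card (D.filter (fun A => x ∈ A)) = r * r') :=
  stmt_3_general r k w b' r' k' B hsize hpc C hCb hCsize hCrep
end

section
/- Let (X,B) be a resolvable (v,k,λ)-BIBD with r parallel classes, and (Y,C) a 3-(w,k',λ')-design with w = v/k, replication number r' = λ'*C(w-1,2)/C(k'-1,2), and pair index λ'_2 = λ'*(w-2)/(k'-2). If three distinct points x,y,z occur in exactly α blocks of B, then the number of blocks of the constructed design D containing all of x, y, z equals α*r' + 3(λ-α)*λ'_2 + (r - α - 3(λ-α))*λ'. -/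
/-!
The block `D_{i,c}` contains `x, y, z` iff `c` contains the set `T_i` of indices of the blocks of
the parallel class `Π_i` through `x, y, z`. The number of such `c` depends only on `|T_i|`:
it is `r'`, `λ'₂` or `λ'` for `|T_i| = 1, 2, 3`. There are `α` classes with `|T_i| = 1`.
Double counting coincident pairs gives `3λ = 3α + #{i : |T_i| = 2}`, so `3(λ - α)` classes
have `|T_i| = 2`, and the remaining ones have `|T_i| = 3`.
-/

open Finset

section Counting

variable {ι β : Type*} [DecidableEq β]

theorem card_filter_coincidences (s : Finset ι) (a b c : ι → β) :
    #(s.filter fun i => a i = b i) + #(s.filter fun i => a i = c i)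
        + #(s.filter fun i => b i = c i)
      = 3 * #(s.filter fun i => a i = b i ∧ a i = c i)
        + #(s.filter fun i => ¬(a i = b i ∧ a i = c i) ∧ (a i = b i ∨ a i = c i ∨ b i = c i)) := by
  simp only [card_filter, ← sum_add_distrib, mul_sum]
  refine sum_congr rfl fun i _ => ?_
  by_cases hab : a i = b i <;> by_cases hac : a i = c i <;> by_cases hbc : b i = c i <;>
    simp_all

theorem sum_ite_coincidences (s : Finset ι) (a b c : ι → β) (u v t lam α : ℕ)
    (hab : #(s.filter fun i => a i = b i) = lam) (hac : #(s.filter fun i => a i = c i) = lam)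
    (hbc : #(s.filter fun i => b i = c i) = lam)
    (hα : #(s.filter fun i => a i = b i ∧ a i = c i) = α) :
    ∑ i ∈ s, (if a i = b i ∧ a i = c i then u
      else if a i = b i ∨ a i = c i ∨ b i = c i then v else t)
      = α * u + 3 * (lam - α) * v + (#s - α - 3 * (lam - α)) * t := by
  have htwo : #(s.filter fun i => ¬(a i = b i ∧ a i = c i) ∧ (a i = b i ∨ a i = c i ∨ b i = c i))
      = 3 * (lam - α) := by
    have := card_filter_coincidences s a b c
    omega
  have hthree : #(s.filter fun i => ¬(a i = b i ∧ a i = c i) ∧ ¬(a i = b i ∨ a i = c i ∨ b i = c i))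
      = #s - α - 3 * (lam - α) := by
    have hall := card_filter_add_card_filter_not (s := s) fun i => a i = b i ∧ a i = c i
    have hnotall := card_filter_add_card_filter_not
      (s := s.filter fun i => ¬(a i = b i ∧ a i = c i)) fun i => a i = b i ∨ a i = c i ∨ b i = c i
    rw [filter_filter, filter_filter] at hnotall
    omega
  rw [sum_ite, sum_ite, filter_filter, filter_filter, sum_const, sum_const, sum_const, hα, htwo,
    hthree]
  simp only [smul_eq_mul, add_assoc]

end Counting

theorem card_filter_mem_three_eq {β : Type*} [DecidableEq β] (C : Multiset (Finset β))
    {r' lam2' lam' : ℕ}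
    (hrep : ∀ a, Multiset.card (C.filter fun B => a ∈ B) = r')
    (hpair : ∀ a b, a ≠ b → Multiset.card (C.filter fun B => a ∈ B ∧ b ∈ B) = lam2')
    (htriple : ∀ T : Finset β, #T = 3 → Multiset.card (C.filter fun B => T ⊆ B) = lam')
    (a b c : β) :
    Multiset.card (C.filter fun B => a ∈ B ∧ b ∈ B ∧ c ∈ B)
      = if a = b ∧ a = c then r' else if a = b ∨ a = c ∨ b = c then lam2' else lam' := by
  split_ifs with hall hsome
  · obtain ⟨rfl, rfl⟩ := hall
    simpa using hrep a
  · rcases hsome with rfl | rfl | rfl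
    · simpa using hpair a c (by simpa using hall)
    · simpa [and_comm] using hpair a b (by simpa using hall)
    · simpa using hpair a b (by simpa using hall)
  · push Not at hsome
    obtain ⟨hab, hac, hbc⟩ := hsome
    rw [← htriple {a, b, c} (Finset.card_eq_three.2 ⟨a, b, c, hab, hac, hbc, rfl⟩)]
    simp only [insert_subset_iff, singleton_subset_iff]

theorem card_filter_prod_eq_card_filter {ι κ : Type*} [Fintype ι] [Fintype κ] [DecidableEq κ]
    (j : ι → κ) (Q : ι → κ → Prop) [∀ i m, Decidable (Q i m)] :
    #(univ.filter fun p : ι × κ => p.2 = j p.1 ∧ Q p.1 p.2)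
      = #(univ.filter fun i => Q i (j i)) := by
  refine card_nbij' Prod.fst (fun i => (i, j i)) ?_ ?_ ?_ ?_ <;>
    simp +contextual [Set.MapsTo, Set.LeftInvOn]

theorem mem_biUnion_iff_of_mem_iff {X κ : Type*} [DecidableEq X] {B : κ → Finset X} {j : X → κ}
    (hB : ∀ p m, p ∈ B m ↔ m = j p) (c : Finset κ) (p : X) : p ∈ c.biUnion B ↔ j p ∈ c := by
  simp [hB]

theorem stmt_6_general {X : Type*} [DecidableEq X]
    (lam r w lam' r' lam2' α : ℕ)
    (B : Fin r → Fin w → Finset X)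
    (hpc : ∀ (i : Fin r) (x : X), ∃! j : Fin w, x ∈ B i j)
    (hpair : ∀ x y : X, x ≠ y →
      (Finset.univ.filter (fun p : Fin r × Fin w => x ∈ B p.1 p.2 ∧ y ∈ B p.1 p.2)).card = lam)
    (C : Multiset (Finset (Fin w)))
    (hC3 : ∀ T : Finset (Fin w), T.card = 3 →
      Multiset.card (C.filter (fun c => T ⊆ c)) = lam')
    (hCrep : ∀ a : Fin w, Multiset.card (C.filter (fun c => a ∈ c)) = r')
    (hCpair : ∀ a b : Fin w, a ≠ b →
      Multiset.card (C.filter (fun c => a ∈ c ∧ b ∈ c)) = lam2')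
    (x y z : X) (hxy : x ≠ y) (hxz : x ≠ z) (hyz : y ≠ z)
    (hα : (Finset.univ.filter (fun p : Fin r × Fin w =>
            x ∈ B p.1 p.2 ∧ y ∈ B p.1 p.2 ∧ z ∈ B p.1 p.2)).card = α) :
    ∀ D : Multiset (Finset X),
      D = (Finset.univ.val : Multiset (Fin r)).bind
            (fun i => C.map (fun c => c.biUnion (fun j => B i j))) →
      Multiset.card (D.filter (fun A => x ∈ A ∧ y ∈ A ∧ z ∈ A))
        = α * r' + 3 * (lam - α) * lam2' + (r - α - 3 * (lam - α)) * lam' := by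
  rintro D rfl
  choose j hj using hpc
  have hB : ∀ i p m, p ∈ B i m ↔ m = j i p := fun i p m =>
    ⟨(hj i p).2 m, fun h => h ▸ (hj i p).1⟩
  have hcoinc : ∀ p q, p ≠ q → #(univ.filter fun i => j i p = j i q) = lam := fun p q hpq => by
    rw [← hpair p q hpq]
    simp only [hB]
    exact (card_filter_prod_eq_card_filter (fun i => j i p) (fun i m => m = j i q)).symm
  have hcoinc3 : #(univ.filter fun i => j i x = j i y ∧ j i x = j i z) = α := by
    rw [← hα]
    simp only [hB]
    exact (card_filter_prod_eq_card_filter (fun i => j i x)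
      (fun i m => m = j i y ∧ m = j i z)).symm
  rw [Multiset.filter_bind, Multiset.card_bind]
  simp only [Function.comp_def, Multiset.filter_map, Multiset.card_map,
    mem_biUnion_iff_of_mem_iff (hB _), card_filter_mem_three_eq C hCrep hCpair hC3]
  rw [← Finset.sum_eq_multiset_sum]
  simpa using sum_ite_coincidences univ (fun i => j i x) (fun i => j i y) (fun i => j i z)
    r' lam2' lam' lam α (hcoinc x y hxy) (hcoinc x z hxz) (hcoinc y z hyz) hcoinc3

/-- Lemma: if three distinct points occur in exactly α blocks of the resolvable master
BIBD, then they occur in α*r' + 3(λ-α)*λ'_2 + (r-α-3(λ-α))*λ' blocks of the design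
constructed with a 3-(w,k',λ')-design as indexing design. -/
theorem stmt_6 {X : Type*} [Fintype X] [DecidableEq X]
    (v k lam r w k' lam' r' lam2' α : ℕ)
    (hk : 2 ≤ k) (hkv : k < v) (hX : Fintype.card X = v) (hvw : v = k * w)
    (B : Fin r → Fin w → Finset X)
    (hsize : ∀ i j, (B i j).card = k)
    (hpc : ∀ (i : Fin r) (x : X), ∃! j : Fin w, x ∈ B i j)
    (hpair : ∀ x y : X, x ≠ y →
      (Finset.univ.filter (fun p : Fin r × Fin w => x ∈ B p.1 p.2 ∧ y ∈ B p.1 p.2)).card = lam)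
    (C : Multiset (Finset (Fin w)))
    (hk'3 : 3 ≤ k') (hk'w : k' < w)
    (hCsize : ∀ c ∈ C, c.card = k')
    (hC3 : ∀ T : Finset (Fin w), T.card = 3 →
      Multiset.card (C.filter (fun c => T ⊆ c)) = lam')
    (hCrep : ∀ a : Fin w, Multiset.card (C.filter (fun c => a ∈ c)) = r')
    (hr' : r' * ((k' - 1).choose 2) = lam' * ((w - 1).choose 2))
    (hCpair : ∀ a b : Fin w, a ≠ b →
      Multiset.card (C.filter (fun c => a ∈ c ∧ b ∈ c)) = lam2')
    (hlam2' : lam2' * (k' - 2) = lam' * (w - 2))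
    (x y z : X) (hxy : x ≠ y) (hxz : x ≠ z) (hyz : y ≠ z)
    (hα : (Finset.univ.filter (fun p : Fin r × Fin w =>
            x ∈ B p.1 p.2 ∧ y ∈ B p.1 p.2 ∧ z ∈ B p.1 p.2)).card = α) :
    ∀ D : Multiset (Finset X),
      D = (Finset.univ.val : Multiset (Fin r)).bind
            (fun i => C.map (fun c => c.biUnion (fun j => B i j))) →
      Multiset.card (D.filter (fun A => x ∈ A ∧ y ∈ A ∧ z ∈ A))
        = α * r' + 3 * (lam - α) * lam2' + (r - α - 3 * (lam - α)) * lam' :=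
  stmt_6_general lam r w lam' r' lam2' α B hpc hpair C hC3 hCrep hCpair x y z hxy hxz hyz hα
end

section
/- Suppose there exist a resolvable (v,b,r,k,λ)-BIBD and a 3-(w, w/2, λ')-design where w = v/k > 4 is even. Then there exists a 3-(v, v/2, μ)-design with μ = λ' * (3λw/(w-4) + r). -/
/-!
Write `w = K + K`. Double counting shows that a 3-design `C` with blocks of size `K` on `w`
points is also a 2-design and a 1-design, with indices `λ₂, λ₁` satisfying
`λ₂ (K - 2) = λ' (2K - 2)` and `λ₁ (K - 1) = λ₂ (2K - 1)`; for this block size they give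
`λ₁ + 2λ' = 3λ₂` and `(λ₂ - λ') (K - 2) = λ' K`.

Let `f i x` be the block of the parallel class `i` containing `x`. The union of the blocks of
class `i` indexed by `c` contains a triple `T` iff `c ⊇ f i '' T`, and `f i '' T` has 3, 2 or 1
points according as 0, 1 or 3 pairs of `T` lie in a common block of class `i`. Hence class `i`
contributes `λ' + (λ₂ - λ') eᵢ` blocks containing `T`, where `eᵢ` counts those pairs; every pair
lies in `λ` blocks of the master design, so `∑ eᵢ = 3λ` and
`μ = rλ' + 3λ(λ₂ - λ') = λ'(3λw/(w - 4) + r)`.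
-/

open Finset

theorem Multiset.sum_map_ite_const {α : Type*} (C : Multiset α) (p : α → Prop) [DecidablePred p]
    (a : ℕ) : (C.map fun c => if p c then a else 0).sum = Multiset.card (C.filter p) * a := by
  induction C using Multiset.induction with
  | empty => simp
  | cons c C ih => by_cases h : p c <;> simp [h, ih, add_mul, add_comm]

section Designs

variable {α : Type*} [DecidableEq α]

def supersetCount (C : Multiset (Finset α)) (S : Finset α) : ℕ :=
  Multiset.card (C.filter fun c => S ⊆ c)

def IsTDesign (C : Multiset (Finset α)) (t L : ℕ) : Prop :=
  ∀ T : Finset α, T.card = t → supersetCount C T = L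

theorem supersetCount_sum {ι : Type*} (s : Finset ι) (M : ι → Multiset (Finset α))
    (S : Finset α) : supersetCount (∑ i ∈ s, M i) S = ∑ i ∈ s, supersetCount (M i) S := by
  simp only [supersetCount, ← Multiset.countP_eq_card_filter, ← Multiset.coe_countPAddMonoidHom,
    map_sum]

theorem IsTDesign.supersetCount_triple {C : Multiset (Finset α)} {l₁ l₂ l₃ : ℕ}
    (hC₁ : IsTDesign C 1 l₁) (hC₂ : IsTDesign C 2 l₂) (hC₃ : IsTDesign C 3 l₃)
    (hle : l₃ ≤ l₂) (hl : l₁ + 2 * l₃ = 3 * l₂) (a b c : α) :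
    supersetCount C {a, b, c} =
      l₃ + (l₂ - l₃) * ((if a = b then 1 else 0) + (if b = c then 1 else 0) +
        (if a = c then 1 else 0)) := by
  rcases eq_or_ne a b with rfl | hab
  · rcases eq_or_ne a c with rfl | hac
    · simp only [insert_eq_of_mem (mem_singleton_self a), hC₁ _ (card_singleton a), if_true]
      omega
    · simp only [mem_insert, mem_singleton, hac, or_false, insert_eq_of_mem,
        hC₂ _ (card_pair hac), ↓reduceIte, add_zero, mul_one]
      omega
  · rcases eq_or_ne b c with rfl | hbc
    · simp only [mem_singleton, insert_eq_of_mem, hC₂ _ (card_pair hab), hab, ↓reduceIte,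
        zero_add, add_zero, mul_one]
      omega
    · rcases eq_or_ne a c with rfl | hac
      · rw [insert_eq_of_mem (by simp), hC₂ _ (card_pair hbc)]
        simp only [hab, ↓reduceIte, hbc, add_zero, zero_add, mul_one]
        omega
      · rw [hC₃ _ (card_eq_three.mpr ⟨a, b, c, hab, hac, hbc, rfl⟩)]
        simp [hab, hbc, hac]

variable [Fintype α]

theorem card_filter_compl_insert_subset (S c : Finset α) :
    #{z ∈ Sᶜ | insert z S ⊆ c} = if S ⊆ c then #(c \ S) else 0 := by
  split_ifs with hS
  · congr 1
    ext z
    simp [insert_subset_iff, hS, and_comm]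
  · rw [card_eq_zero, filter_eq_empty_iff]
    exact fun z _ h => hS ((subset_insert z S).trans h)

/-- Double counting the pairs `(c, z)` with `insert z S ⊆ c ∈ C` and `z ∉ S`. -/
theorem IsTDesign.supersetCount_mul {C : Multiset (Finset α)} {K t L : ℕ}
    (hC : IsTDesign C (t + 1) L) (hK : ∀ c ∈ C, c.card = K) {S : Finset α} (hS : S.card = t) :
    supersetCount C S * (K - t) = L * (Fintype.card α - t) := by
  have hcount : ∀ c ∈ C, #{z ∈ Sᶜ | insert z S ⊆ c} = if S ⊆ c then K - t else 0 := by
    intro c hc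
    rw [card_filter_compl_insert_subset]
    split_ifs with hSc
    · rw [card_sdiff_of_subset hSc, hK c hc, hS]
    · rfl
  calc supersetCount C S * (K - t)
      = (C.map fun c => #{z ∈ Sᶜ | insert z S ⊆ c}).sum := by
        rw [Multiset.map_congr rfl hcount, Multiset.sum_map_ite_const]; rfl
    _ = ∑ z ∈ Sᶜ, supersetCount C (insert z S) := by
        simp only [card_filter, Multiset.sum_map_sum, Multiset.sum_map_ite_const, mul_one]; rfl
    _ = L * (Fintype.card α - t) := by
        rw [sum_congr rfl fun z hz => hC _ ?_, sum_const, card_compl, hS, smul_eq_mul, mul_comm]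
        rw [card_insert_of_notMem (mem_compl.mp hz), hS]

theorem IsTDesign.exists_of_succ {C : Multiset (Finset α)} {K t L : ℕ}
    (hC : IsTDesign C (t + 1) L) (hK : ∀ c ∈ C, c.card = K) (htK : t < K)
    (ht : t ≤ Fintype.card α) :
    ∃ L', IsTDesign C t L' ∧ L' * (K - t) = L * (Fintype.card α - t) := by
  obtain ⟨S₀, -, hS₀⟩ := exists_subset_card_eq (s := univ) (by simpa using ht)
  refine ⟨supersetCount C S₀, fun S hS => ?_, hC.supersetCount_mul hK hS₀⟩
  apply Nat.eq_of_mul_eq_mul_right (Nat.sub_pos_of_lt htK)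
  rw [hC.supersetCount_mul hK hS, hC.supersetCount_mul hK hS₀]

theorem IsTDesign.exists_indices_of_halving {C : Multiset (Finset α)} {K L : ℕ}
    (hC : IsTDesign C 3 L) (hK : ∀ c ∈ C, c.card = K) (hcard : Fintype.card α = K + K)
    (h3K : 3 ≤ K) :
    ∃ l₁ l₂, IsTDesign C 1 l₁ ∧ IsTDesign C 2 l₂ ∧ L ≤ l₂ ∧ l₁ + 2 * L = 3 * l₂ ∧
      (l₂ - L) * (K - 2) = L * K := by
  obtain ⟨l₂, hC₂, h₂⟩ := hC.exists_of_succ hK (by omega) (by omega)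
  obtain ⟨l₁, hC₁, h₁⟩ := hC₂.exists_of_succ hK (by omega) (by omega)
  obtain ⟨m, rfl⟩ : ∃ m, K = m + 3 := ⟨K - 3, by omega⟩
  rw [hcard, show m + 3 - 2 = m + 1 by omega, show m + 3 + (m + 3) - 2 = 2 * (m + 2) by omega]
    at h₂
  rw [hcard, show m + 3 - 1 = m + 2 by omega, show m + 3 + (m + 3) - 1 = 2 * m + 5 by omega]
    at h₁
  have hle : L ≤ l₂ := Nat.le_of_mul_le_mul_right (by nlinarith) (Nat.succ_pos m)
  refine ⟨l₁, l₂, hC₁, hC₂, hle, ?_, ?_⟩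
  · apply Nat.eq_of_mul_eq_mul_right (show 0 < (m + 1) * (m + 2) by positivity)
    nlinarith
  · rw [show m + 3 - 2 = m + 1 by omega]
    zify [hle] at h₂ ⊢
    linear_combination h₂

end Designs

section Resolution

variable {X ι : Type*} [DecidableEq X]

theorem subset_biUnion_iff_image_subset [DecidableEq ι] {P : ι → Finset X} {g : X → ι}
    (hP : ∀ x j, x ∈ P j ↔ g x = j) (T : Finset X) (c : Finset ι) :
    T ⊆ c.biUnion P ↔ T.image g ⊆ c := by
  simp [subset_iff, hP]

theorem card_biUnion_of_fibers {P : ι → Finset X} {g : X → ι}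
    (hP : ∀ x j, x ∈ P j ↔ g x = j) {k : ℕ} (hk : ∀ j, (P j).card = k) (c : Finset ι) :
    (c.biUnion P).card = c.card * k := by
  rw [card_biUnion fun j₁ _ j₂ _ hne => disjoint_left.mpr fun x h₁ h₂ =>
    hne (((hP x j₁).mp h₁).symm.trans ((hP x j₂).mp h₂)), sum_const_nat fun j _ => hk j]

theorem card_filter_mem_mem_eq [DecidableEq ι] {R : Type*} [Fintype R] [Fintype ι]
    {B : R → ι → Finset X} {f : R → X → ι} (hB : ∀ i x j, x ∈ B i j ↔ f i x = j) (x y : X) :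
    #{p : R × ι | x ∈ B p.1 p.2 ∧ y ∈ B p.1 p.2} = #{i | f i x = f i y} := by
  refine card_nbij' Prod.fst (fun i => (i, f i x)) ?_ ?_ ?_ ?_ <;>
    simp +contextual [Set.MapsTo, Set.LeftInvOn, Set.RightInvOn, hB]

theorem supersetCount_map_biUnion [DecidableEq ι] {P : ι → Finset X} {g : X → ι}
    (hP : ∀ x j, x ∈ P j ↔ g x = j) (C : Multiset (Finset ι)) (T : Finset X) :
    supersetCount (C.map fun c => c.biUnion P) T = supersetCount C (T.image g) := by
  simp only [supersetCount, Multiset.filter_map, Multiset.card_map]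
  congr 1
  exact Multiset.filter_congr fun c _ => subset_biUnion_iff_image_subset hP T c

theorem supersetCount_sum_map_biUnion_of_card_eq_three [DecidableEq ι] {R : Type*} [Fintype R]
    {B : R → ι → Finset X} {f : R → X → ι} (hB : ∀ i x j, x ∈ B i j ↔ f i x = j) {lam : ℕ}
    (hpair : ∀ x y, x ≠ y → #{i | f i x = f i y} = lam)
    {C : Multiset (Finset ι)} {l₁ l₂ l₃ : ℕ}
    (hC₁ : IsTDesign C 1 l₁) (hC₂ : IsTDesign C 2 l₂) (hC₃ : IsTDesign C 3 l₃)
    (hle : l₃ ≤ l₂) (hl : l₁ + 2 * l₃ = 3 * l₂) {T : Finset X} (hT : T.card = 3) :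
    supersetCount (∑ i, C.map fun c => c.biUnion (B i)) T =
      Fintype.card R * l₃ + (l₂ - l₃) * (3 * lam) := by
  obtain ⟨x, y, z, hxy, hxz, hyz, rfl⟩ := card_eq_three.mp hT
  simp only [supersetCount_sum, supersetCount_map_biUnion (hB _), image_insert, image_singleton,
    hC₁.supersetCount_triple hC₂ hC₃ hle hl, sum_add_distrib, ← mul_sum, sum_boole,
    hpair x y hxy, hpair y z hyz, hpair x z hxz, Nat.cast_id, sum_const, card_univ, smul_eq_mul]
  ring

end Resolution

theorem index_cast_eq_of_halving {K r lam L d : ℕ} (hK : 3 ≤ K) (hd : d * (K - 2) = L * K) :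
    ((r * L + d * (3 * lam) : ℕ) : ℚ) =
      L * (3 * lam * ((K + K : ℕ) : ℚ) / ((K + K : ℕ) - 4) + r) := by
  have hK₂ : (K : ℚ) - 2 ≠ 0 := by
    have : (3 : ℚ) ≤ K := by exact_mod_cast hK
    linarith
  have hd' : (d : ℚ) = L * K / (K - 2) := by
    rw [eq_div_iff hK₂]
    have := congrArg (Nat.cast : ℕ → ℚ) hd
    push_cast [Nat.cast_sub (show 2 ≤ K by omega)] at this
    exact this
  rw [Nat.cast_add, Nat.cast_mul, Nat.cast_mul, hd',
    show ((K + K : ℕ) : ℚ) - 4 = 2 * (K - 2) by push_cast; ring]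
  push_cast
  field_simp
  ring

theorem stmt_8_general {X : Type*} [DecidableEq X]
    (v r k w lam lam' : ℕ)
    (hvw : v = k * w) (hw4 : 4 < w) (hweven : Even w)
    (B : Fin r → Fin w → Finset X)
    (hsize : ∀ i j, (B i j).card = k)
    (hpc : ∀ (i : Fin r) (x : X), ∃! j : Fin w, x ∈ B i j)
    (hpair : ∀ x y : X, x ≠ y →
      (Finset.univ.filter (fun p : Fin r × Fin w => x ∈ B p.1 p.2 ∧ y ∈ B p.1 p.2)).card = lam)
    (C : Multiset (Finset (Fin w)))
    (hCsize : ∀ c ∈ C, c.card = w / 2)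
    (hC3 : ∀ T : Finset (Fin w), T.card = 3 →
      Multiset.card (C.filter (fun c => T ⊆ c)) = lam') :
    ∃ μ : ℕ, (μ : ℚ) = (lam' : ℚ) * (3 * (lam : ℚ) * (w : ℚ) / ((w : ℚ) - 4) + (r : ℚ)) ∧
      ∃ D : Multiset (Finset X),
        (∀ A ∈ D, A.card = v / 2) ∧
        (∀ T : Finset X, T.card = 3 →
          Multiset.card (D.filter (fun A => T ⊆ A)) = μ) := by
  obtain ⟨K, rfl⟩ := hweven
  choose f hf hfu using hpc
  have hB : ∀ i x j, x ∈ B i j ↔ f i x = j :=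
    fun i x j => ⟨fun h => (hfu i x j h).symm, fun h => h ▸ hf i x⟩
  have hCK : ∀ c ∈ C, c.card = K := fun c hc => by rw [hCsize c hc]; omega
  obtain ⟨l₁, l₂, hC₁, hC₂, hle, hl, hl₂⟩ :=
    IsTDesign.exists_indices_of_halving hC3 hCK (Fintype.card_fin _) (by omega)
  refine ⟨r * lam' + (l₂ - lam') * (3 * lam), ?_, ∑ i, C.map fun c => c.biUnion (B i), ?_, ?_⟩
  · exact index_cast_eq_of_halving (by omega) hl₂
  · intro A hA
    obtain ⟨i, c, hc, rfl⟩ := by simpa using hA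
    rw [card_biUnion_of_fibers (hB i) (hsize i), hCK c hc, hvw,
      show k * (K + K) = 2 * (K * k) by ring, Nat.mul_div_cancel_left _ two_pos]
  · intro T hT
    exact (supersetCount_sum_map_biUnion_of_card_eq_three hB
      (fun x y hxy => (card_filter_mem_mem_eq hB x y).symm.trans (hpair x y hxy))
      hC₁ hC₂ hC3 hle hl hT).trans (by rw [Fintype.card_fin])

/-- Given a resolvable (v,b,r,k,λ)-BIBD and a 3-(w, w/2, λ')-design with
w = v/k > 4 even, there exists a 3-(v, v/2, μ)-design with
μ = λ'*(3λw/(w-4) + r). -/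
theorem stmt_8 {X : Type*} [Fintype X] [DecidableEq X]
    (v b r k w lam lam' : ℕ)
    (hk : 2 ≤ k) (hkv : k < v) (hX : Fintype.card X = v)
    (hvw : v = k * w) (hb : b = r * w) (hw4 : 4 < w) (hweven : Even w)
    (B : Fin r → Fin w → Finset X)
    (hsize : ∀ i j, (B i j).card = k)
    (hpc : ∀ (i : Fin r) (x : X), ∃! j : Fin w, x ∈ B i j)
    (hpair : ∀ x y : X, x ≠ y →
      (Finset.univ.filter (fun p : Fin r × Fin w => x ∈ B p.1 p.2 ∧ y ∈ B p.1 p.2)).card = lam)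
    (C : Multiset (Finset (Fin w)))
    (hCsize : ∀ c ∈ C, c.card = w / 2)
    (hC3 : ∀ T : Finset (Fin w), T.card = 3 →
      Multiset.card (C.filter (fun c => T ⊆ c)) = lam') :
    ∃ μ : ℕ, (μ : ℚ) = (lam' : ℚ) * (3 * (lam : ℚ) * (w : ℚ) / ((w : ℚ) - 4) + (r : ℚ)) ∧
      ∃ D : Multiset (Finset X),
        (∀ A ∈ D, A.card = v / 2) ∧
        (∀ T : Finset X, T.card = 3 →
          Multiset.card (D.filter (fun A => T ⊆ A)) = μ) :=
  stmt_8_general v r k w lam lam' hvw hw4 hweven B hsize hpc hpair C hCsize hC3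
end

section
/- If the indexing design (Y,C) in the Construction is resolvable, then the constructed design (X,D) is resolvable. -/
/-!
For each parallel class `Πᵢ` of the outer design and each parallel class `Γₗ` of the indexing
design, the blocks `D_{i,C}` with `C ∈ Γₗ` form a parallel class: a point `x` lies in a
unique block `B_{i,j}` of `Πᵢ`, and `j` lies in a unique block `C` of `Γₗ`, so `D_{i,C}` is
the unique block of the class containing `x`. The `r * r'` classes obtained this way partition `D`.
-/

open Finset

def Multiset.IsParallelClass {α : Type*} [DecidableEq α] (P : Multiset (Finset α)) : Prop :=
  ∀ x : α, Multiset.card (P.filter (x ∈ ·)) = 1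

theorem Multiset.isParallelClass_map_univ {α κ : Type*} [DecidableEq α] [Fintype κ]
    {A : κ → Finset α} (hA : ∀ x, ∃! m, x ∈ A m) :
    ((univ.val : Multiset κ).map A).IsParallelClass := by
  intro x
  obtain ⟨m₀, hm₀, hm₀_unique⟩ := hA x
  rw [Multiset.filter_map, Multiset.card_map, ← filter_val, card_val, Finset.card_eq_one]
  exact ⟨m₀, eq_singleton_iff_unique_mem.2
    ⟨by simpa using hm₀, fun m hm => hm₀_unique m (by simpa using hm)⟩⟩

theorem Finset.existsUnique_mem_biUnion {α ι κ : Type*} [DecidableEq α]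
    {B : ι → Finset α} {Γ : κ → Finset ι}
    (hB : ∀ x, ∃! j, x ∈ B j) (hΓ : ∀ j, ∃! m, j ∈ Γ m) (x : α) :
    ∃! m, x ∈ (Γ m).biUnion B := by
  obtain ⟨j₀, hj₀, hj₀_unique⟩ := hB x
  obtain ⟨m₀, hm₀, hm₀_unique⟩ := hΓ j₀
  refine ⟨m₀, mem_biUnion.2 ⟨j₀, hm₀, hj₀⟩, fun m hm => ?_⟩
  obtain ⟨j, hj, hxj⟩ := mem_biUnion.1 hm
  exact hm₀_unique m (hj₀_unique j hxj ▸ hj)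

theorem Multiset.bind_univ_map_prod {ι κ μ β : Type*} [Fintype ι] [Fintype κ] [Fintype μ]
    (F : ι → κ × μ → β) :
    (univ.val : Multiset ι).bind (fun i => (univ.val : Multiset (κ × μ)).map (F i)) =
      ∑ p : ι × κ, (univ.val : Multiset μ).map (fun m => F p.1 (p.2, m)) := by
  rw [Fintype.sum_prod_type]
  refine sum_congr rfl fun i _ => ?_
  rw [← univ_product_univ, product_val]
  simp only [SProd.sprod, Multiset.product, Multiset.map_bind, Multiset.map_map]
  rfl

theorem Fintype.exists_fin_reindex {ι M : Type*} [Fintype ι] [AddCommMonoid M] (P : ι → M) :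
    ∃ (n : ℕ) (Q : Fin n → M), ∑ l, Q l = ∑ i, P i ∧ ∀ l, ∃ i, Q l = P i :=
  ⟨_, P ∘ (Fintype.equivFin ι).symm, Equiv.sum_comp _ P, fun _ => ⟨_, rfl⟩⟩

theorem stmt_10_general {X : Type*} [DecidableEq X]
    (r w r' u : ℕ)
    (B : Fin r → Fin w → Finset X)
    (hpc : ∀ (i : Fin r) (x : X), ∃! j : Fin w, x ∈ B i j)
    -- the indexing design, given with a resolution into r' parallel classes of u = w/k' blocks
    (Γ : Fin r' → Fin u → Finset (Fin w))
    (hΓpc : ∀ (l : Fin r') (a : Fin w), ∃! m : Fin u, a ∈ Γ l m) :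
    ∀ D : Multiset (Finset X),
      D = (Finset.univ.val : Multiset (Fin r)).bind
            (fun i => (Finset.univ.val : Multiset (Fin r' × Fin u)).map
              (fun p => (Γ p.1 p.2).biUnion (fun j => B i j))) →
      -- the constructed design is resolvable
      ∃ (n : ℕ) (P : Fin n → Multiset (Finset X)),
        (∑ l : Fin n, P l) = D ∧
        ∀ (l : Fin n) (x : X), Multiset.card ((P l).filter (fun A => x ∈ A)) = 1 := by
  rintro D rfl
  obtain ⟨n, P, hsum, hP⟩ := Fintype.exists_fin_reindex fun p : Fin r × Fin r' =>
    (univ.val : Multiset (Fin u)).map fun m => (Γ p.2 m).biUnion (B p.1)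
  refine ⟨n, P, ?_, fun q => ?_⟩
  · exact hsum.trans (Multiset.bind_univ_map_prod fun i p => (Γ p.1 p.2).biUnion (B i)).symm
  · obtain ⟨⟨i, l⟩, hq⟩ := hP q
    exact hq ▸ Multiset.isParallelClass_map_univ (existsUnique_mem_biUnion (hpc i) (hΓpc l))

/-- If the indexing design in the Construction is resolvable, then the constructed
design is resolvable. -/
theorem stmt_10 {X : Type*} [Fintype X] [DecidableEq X]
    (v b r k w b' r' k' u : ℕ)
    (hk : 2 ≤ k) (hkv : k < v) (hX : Fintype.card X = v)
    (hvw : v = k * w) (hb : b = r * w)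
    (B : Fin r → Fin w → Finset X)
    (hsize : ∀ i j, (B i j).card = k)
    (hpc : ∀ (i : Fin r) (x : X), ∃! j : Fin w, x ∈ B i j)
    -- the indexing design, given with a resolution into r' parallel classes of u = w/k' blocks
    (hk' : 2 ≤ k') (hk'w : k' < w) (hu : w = k' * u)
    (Γ : Fin r' → Fin u → Finset (Fin w))
    (hΓsize : ∀ l m, (Γ l m).card = k')
    (hΓpc : ∀ (l : Fin r') (a : Fin w), ∃! m : Fin u, a ∈ Γ l m) :
    ∀ D : Multiset (Finset X),
      D = (Finset.univ.val : Multiset (Fin r)).bind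
            (fun i => (Finset.univ.val : Multiset (Fin r' × Fin u)).map
              (fun p => (Γ p.1 p.2).biUnion (fun j => B i j))) →
      -- the constructed design is resolvable
      ∃ (n : ℕ) (P : Fin n → Multiset (Finset X)),
        (∑ l : Fin n, P l) = D ∧
        ∀ (l : Fin n) (x : X), Multiset.card ((P l).filter (fun A => x ∈ A)) = 1 :=
  stmt_10_general r w r' u B hpc Γ hΓpc
end

section
/- For all integers v, k with k ≥ 2, 2k dividing v, and v/k ≥ 4, the inequality C(v-1, k-1) * C(v/k, v/(2k)) < C(v, v/2) holds. -/
/-!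
With `v = 2km`, write `R k = C(2mk, mk)` and `B k = C(2mk, k) = 2m · C(2mk - 1, k - 1)`.
At `k = 1` the ratio `R k / B k` is `C(2m, m) / 2m`, so it suffices that this ratio is
strictly increasing in `k` once `m ≥ 2`. Both `R (k+1) / R k` and `B (k+1) / B k` are quotients
of rising factorials with the common numerator `(2mk + 1)^(2m)`, and the increase reduces to
`((mk + 1)^(m))² < (k + 1) · ((2m - 1)k + 1)^(2m - 1)`. Pairing two consecutive factors on the
right against the square of one factor on the left gains a factor `2` each time, which beats
the single unpaired factor.
-/

namespace Nat

theorem centralBinom_mul_factorial_sq (n : ℕ) : centralBinom n * n ! ^ 2 = (2 * n)! := by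
  rw [centralBinom_eq_two_mul_choose, two_mul, ← add_choose_mul_factorial_mul_factorial]
  ring

theorem centralBinom_add_mul_ascFactorial_sq (n m : ℕ) :
    centralBinom (n + m) * (n + 1).ascFactorial m ^ 2
      = centralBinom n * (2 * n + 1).ascFactorial (2 * m) := by
  apply Nat.eq_of_mul_eq_mul_right (pow_pos (factorial_pos n) 2)
  calc centralBinom (n + m) * (n + 1).ascFactorial m ^ 2 * n ! ^ 2
      = centralBinom (n + m) * (n ! * (n + 1).ascFactorial m) ^ 2 := by ring
    _ = (2 * n) ! * (2 * n + 1).ascFactorial (2 * m) := by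
      rw [factorial_mul_ascFactorial, centralBinom_mul_factorial_sq, factorial_mul_ascFactorial,
        mul_add]
    _ = centralBinom n * (2 * n + 1).ascFactorial (2 * m) * n ! ^ 2 := by
      rw [← centralBinom_mul_factorial_sq]; ring

theorem add_choose_succ_mul_ascFactorial (a k r : ℕ) :
    (a + r + k + 1).choose (k + 1) * (k + 1) * (a + 1).ascFactorial r
      = (a + k).choose k * (a + k + 1).ascFactorial (r + 1) := by
  apply Nat.eq_of_mul_eq_mul_left (factorial_pos k)
  calc k ! * ((a + r + k + 1).choose (k + 1) * (k + 1) * (a + 1).ascFactorial r)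
      = (a + 1).ascFactorial r * (a + 1 + r).ascFactorial (k + 1) := by
        rw [add_right_comm a 1 r, ascFactorial_eq_factorial_mul_choose (a + r) (k + 1),
          factorial_succ, show a + r + (k + 1) = a + r + k + 1 by ring]
        ring
    _ = (a + 1).ascFactorial k * (a + 1 + k).ascFactorial (r + 1) := by
      rw [ascFactorial_mul_ascFactorial, ascFactorial_mul_ascFactorial, add_left_comm]
    _ = k ! * ((a + k).choose k * (a + k + 1).ascFactorial (r + 1)) := by
      rw [ascFactorial_eq_factorial_mul_choose, add_right_comm a 1 k]
      ring

theorem two_mul_sq_le_sub_mul_sub {k x : ℕ} (h : 2 * k + 1 ≤ x) :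
    2 * x ^ 2 ≤ (2 * x - k - 1) * (2 * x - k) := by
  obtain ⟨y, rfl⟩ := Nat.exists_eq_add_of_le h
  rw [show 2 * (2 * k + 1 + y) - k - 1 = 3 * k + 1 + 2 * y by omega,
    show 2 * (2 * k + 1 + y) - k = 3 * k + 2 + 2 * y by omega]
  nlinarith

theorem two_pow_mul_ascFactorial_sq_le {k a : ℕ} (h : 2 * k + 1 ≤ a) (r : ℕ) :
    2 ^ r * a.ascFactorial r ^ 2 ≤ (2 * a - k - 1).ascFactorial (2 * r) := by
  induction r with
  | zero => simp
  | succ r ih =>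
    have hpair := two_mul_sq_le_sub_mul_sub (k := k) (x := a + r) (by omega)
    calc 2 ^ (r + 1) * a.ascFactorial (r + 1) ^ 2
        = 2 * (a + r) ^ 2 * (2 ^ r * a.ascFactorial r ^ 2) := by
          rw [ascFactorial_succ]; ring
      _ ≤ (2 * (a + r) - k - 1) * (2 * (a + r) - k) * (2 * a - k - 1).ascFactorial (2 * r) :=
          Nat.mul_le_mul hpair ih
      _ = (2 * a - k - 1).ascFactorial (2 * (r + 1)) := by
          rw [show 2 * (r + 1) = 2 * r + 1 + 1 by ring, ascFactorial_succ, ascFactorial_succ,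
            show 2 * a - k - 1 + (2 * r + 1) = 2 * (a + r) - k by omega,
            show 2 * a - k - 1 + 2 * r = 2 * (a + r) - k - 1 by omega]
          ring

theorem ascFactorial_sq_lt_succ_mul_ascFactorial {m : ℕ} (hm : 2 ≤ m) (k : ℕ) :
    (m * k + 1).ascFactorial m ^ 2 < (k + 1) * ((2 * m - 1) * k + 1).ascFactorial (2 * m - 1) := by
  obtain ⟨t, rfl⟩ : ∃ t, m = t + 1 := ⟨m - 1, by omega⟩
  have hpair := two_pow_mul_ascFactorial_sq_le (k := k) (a := (t + 1) * k + 1) (by nlinarith) t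
  rw [show 2 * ((t + 1) * k + 1) - k - 1 = (2 * t + 1) * k + 1 by
    rw [Nat.sub_sub]; apply Nat.sub_eq_of_eq_add; ring] at hpair
  have hlast : (t + 1) ^ 2 < 2 ^ t * (2 * t + 1) := by
    have : t + 1 ≤ 2 ^ t := Nat.lt_two_pow_self
    nlinarith
  have hpos := ascFactorial_pos ((t + 1) * k) t
  rw [show 2 * (t + 1) - 1 = 2 * t + 1 by omega]
  -- The unpaired factors are `(t + 1) * k + 1 + t = (t + 1) * (k + 1)` on the left and
  -- `(2 * t + 1) * k + 1 + 2 * t = (2 * t + 1) * (k + 1)` on the right.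
  calc ((t + 1) * k + 1).ascFactorial (t + 1) ^ 2
      = (k + 1) ^ 2 * ((t + 1) ^ 2 * ((t + 1) * k + 1).ascFactorial t ^ 2) := by
        rw [ascFactorial_succ]; ring
    _ < (k + 1) ^ 2 * (2 ^ t * (2 * t + 1) * ((t + 1) * k + 1).ascFactorial t ^ 2) := by
        gcongr
    _ = (k + 1) * ((2 * t + 1) * k + 1 + 2 * t)
          * (2 ^ t * ((t + 1) * k + 1).ascFactorial t ^ 2) := by
        ring
    _ ≤ (k + 1) * ((2 * t + 1) * k + 1 + 2 * t)
          * ((2 * t + 1) * k + 1).ascFactorial (2 * t) := by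
        gcongr
    _ = (k + 1) * ((2 * t + 1) * k + 1).ascFactorial (2 * t + 1) := by
        rw [ascFactorial_succ]; ring

theorem centralBinom_mul_choose_lt {m : ℕ} (hm : 2 ≤ m) (k : ℕ) :
    centralBinom (m * k) * (2 * m * (k + 1)).choose (k + 1)
      < centralBinom (m * (k + 1)) * (2 * m * k).choose k := by
  set P := (m * k + 1).ascFactorial m ^ 2
  set Q := (k + 1) * ((2 * m - 1) * k + 1).ascFactorial (2 * m - 1)
  set X := (2 * m * k + 1).ascFactorial (2 * m)
  have hR : centralBinom (m * (k + 1)) * P = centralBinom (m * k) * X := by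
    have h := centralBinom_add_mul_ascFactorial_sq (m * k) m
    rwa [← mul_assoc, ← mul_add_one] at h
  have hB : (2 * m * (k + 1)).choose (k + 1) * Q = (2 * m * k).choose k * X := by
    have h := add_choose_succ_mul_ascFactorial ((2 * m - 1) * k) k (2 * m - 1)
    have e : (2 * m - 1) * k + k = 2 * m * k := by
      rw [← Nat.succ_mul, Nat.succ_eq_add_one, Nat.sub_add_cancel (by omega)]
    rw [show (2 * m - 1) * k + (2 * m - 1) + k + 1 = 2 * m * (k + 1) by
        rw [add_right_comm _ _ k, e, add_assoc, Nat.sub_add_cancel (by omega)]; ring,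
      e, Nat.sub_add_cancel (by omega)] at h
    rw [← h]; ring
  have hK : P < Q := ascFactorial_sq_lt_succ_mul_ascFactorial hm k
  have hpos : 0 < centralBinom (m * (k + 1)) * (2 * m * k).choose k :=
    Nat.mul_pos (centralBinom_pos _) (choose_pos (by nlinarith))
  refine Nat.lt_of_mul_lt_mul_right (a := Q) ?_
  calc centralBinom (m * k) * (2 * m * (k + 1)).choose (k + 1) * Q
      = centralBinom (m * (k + 1)) * (2 * m * k).choose k * P := by
        rw [mul_assoc, hB, mul_right_comm _ _ P, hR]; ring
    _ < centralBinom (m * (k + 1)) * (2 * m * k).choose k * Q :=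
        Nat.mul_lt_mul_of_pos_left hK hpos

theorem strictMono_centralBinom_div_choose {m : ℕ} (hm : 2 ≤ m) :
    StrictMono fun k => (centralBinom (m * k) : ℚ) / (2 * m * k).choose k :=
  strictMono_nat_of_lt_succ fun k => by
    have hpos (j : ℕ) : (0 : ℚ) < (2 * m * j).choose j :=
      mod_cast choose_pos (by nlinarith)
    rw [div_lt_div_iff₀ (hpos k) (hpos (k + 1))]
    exact_mod_cast centralBinom_mul_choose_lt hm k

theorem choose_mul_centralBinom_lt {m k : ℕ} (hm : 2 ≤ m) (hk : 2 ≤ k) :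
    (2 * m * k - 1).choose (k - 1) * centralBinom m < centralBinom (m * k) := by
  have h := strictMono_centralBinom_div_choose hm (show 1 < k by omega)
  simp only [mul_one, choose_one_right] at h
  rw [div_lt_div_iff₀ (by positivity) (mod_cast choose_pos (by nlinarith))] at h
  have h' : centralBinom m * (2 * m * k).choose k < centralBinom (m * k) * (2 * m) := by
    exact_mod_cast h
  rw [choose_mul_right (by omega)] at h'
  refine Nat.lt_of_mul_lt_mul_left (a := 2 * m) ?_
  linarith

end Nat

/-- For k ≥ 2, 2k ∣ v, v/k ≥ 4:  C(v-1,k-1) * C(v/k, v/(2k)) < C(v, v/2). -/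
theorem stmt_11 (v k : ℕ) (hk : 2 ≤ k) (hdvd : 2 * k ∣ v) (hw : 4 ≤ v / k) :
    (v - 1).choose (k - 1) * (v / k).choose (v / (2 * k)) < v.choose (v / 2) := by
  obtain ⟨c, rfl⟩ := hdvd
  have hk0 : 0 < k := by omega
  have hvk : 2 * k * c / k = 2 * c := by rw [mul_right_comm, Nat.mul_div_cancel _ hk0]
  rw [hvk] at hw ⊢
  rw [Nat.mul_div_cancel_left _ (by omega), mul_right_comm, mul_assoc,
    Nat.mul_div_cancel_left _ two_pos]
  have h := Nat.choose_mul_centralBinom_lt (m := c) (by omega) hk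
  rwa [Nat.centralBinom_eq_two_mul_choose, Nat.centralBinom_eq_two_mul_choose, mul_assoc] at h
end
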